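/- arXiv:1706.09681 — 2 statements merged into one kernel-verified Lean document; each statement's English description precedes it below -/
import Mathlib

section
/- For λ ∈ ℝ, r a nonnegative integer, and nonnegative integers n, k with n ≥ k, the extended degenerate Stirling numbers of the second kind satisfy S_{2,r}(n+r, k+r | λ) = Σ_{m=0}^{n−k} C(m+k, m) C(r, m) m! S_{2,λ}(n, m+k), where C(r,m) = r(r−1)⋯(r−m+1)/m! is the binomial coefficient. -/
open Finset

/-- The degenerate falling factorial `(x|λ)_n = x(x-λ)(x-2λ)⋯(x-(n-1)λ)`. -/
noncomputable def degFall (x lam : ℝ) (n : ℕ) : ℝ := ∏ i ∈ Finset.range n, (x - i * lam)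

/-- The formal power series `(1+λt)^{y/λ} = Σ_{m=0}^∞ (y|λ)_m t^m/m!`. -/
noncomputable def degExp (lam y : ℝ) : PowerSeries ℝ :=
  PowerSeries.mk fun m => degFall y lam m / m.factorial

/-- The degenerate Stirling numbers of the second kind `S_{2,λ}(n,k)`, defined by
`(1/k!)((1+λt)^{1/λ} - 1)^k = Σ_{n=k}^∞ S_{2,λ}(n,k) t^n/n!`. -/
noncomputable def degStirling2 (lam : ℝ) (n k : ℕ) : ℝ :=
  (n.factorial : ℝ) *
    PowerSeries.coeff n (((k.factorial : ℝ))⁻¹ • (degExp lam 1 - 1) ^ k)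

/-- The extended degenerate Stirling numbers of the second kind `S_{2,r}(n+r,k+r|λ)`,
defined by `(1/k!)(1+λt)^{r/λ}((1+λt)^{1/λ} - 1)^k = Σ_{n=k}^∞ S_{2,r}(n+r,k+r|λ) t^n/n!`. -/
noncomputable def extDegStirling2 (lam : ℝ) (r n k : ℕ) : ℝ :=
  (n.factorial : ℝ) *
    PowerSeries.coeff n
      (((k.factorial : ℝ))⁻¹ • (degExp lam r * (degExp lam 1 - 1) ^ k))

/-- The exponential `e^f = Σ_{k=0}^∞ f^k / k!` of a formal power series, computed
coefficientwise (the coefficientwise sums converge when `f` has zero constant term). -/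
noncomputable def expComp (f : PowerSeries ℝ) : PowerSeries ℝ :=
  PowerSeries.mk fun n => ∑' k : ℕ, PowerSeries.coeff n (f ^ k) / k.factorial

/-- The degenerate Bell polynomials, defined by
`e^{x((1+λt)^{1/λ} - 1)} = Σ_{n=0}^∞ Bel_{n,λ}(x) t^n/n!`. -/
noncomputable def degBell (lam x : ℝ) (n : ℕ) : ℝ :=
  (n.factorial : ℝ) * PowerSeries.coeff n (expComp (x • (degExp lam 1 - 1)))

/-- The extended degenerate Bell polynomials, defined by
`(1+λt)^{r/λ} e^{x((1+λt)^{1/λ} - 1)} = Σ_{n=0}^∞ Bel^{(r)}_{n,λ}(x) t^n/n!`. -/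
noncomputable def extDegBell (lam : ℝ) (r : ℕ) (x : ℝ) (n : ℕ) : ℝ :=
  (n.factorial : ℝ) *
    PowerSeries.coeff n (degExp lam r * expComp (x • (degExp lam 1 - 1)))

/-- The signed Stirling numbers of the first kind `S_1(n,k)`, defined by
`(x)_n = x(x-1)⋯(x-n+1) = Σ_{k=0}^n S_1(n,k) x^k`. -/
noncomputable def stirling1 (n k : ℕ) : ℝ :=
  (∏ i ∈ Finset.range n, (Polynomial.X - Polynomial.C (i : ℝ))).coeff k

/-- The Stirling numbers of the second kind, defined by
`(1/k!)(e^t - 1)^k = Σ_{n=k}^∞ S_2(n,k) t^n/n!`. -/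
noncomputable def stirling2 (n k : ℕ) : ℝ :=
  (n.factorial : ℝ) *
    PowerSeries.coeff n (((k.factorial : ℝ))⁻¹ • (PowerSeries.exp ℝ - 1) ^ k)

/-- The r-Stirling numbers of the second kind `S_{2,r}(n+r,k+r)`, defined by
`e^{rt}(1/k!)(e^t - 1)^k = Σ_{n=0}^∞ S_{2,r}(n+r,k+r) t^n/n!`. -/
noncomputable def rStirling2 (r n k : ℕ) : ℝ :=
  (n.factorial : ℝ) *
    PowerSeries.coeff n
      (PowerSeries.rescale (r : ℝ) (PowerSeries.exp ℝ) *
        ((k.factorial : ℝ))⁻¹ • (PowerSeries.exp ℝ - 1) ^ k)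

/-- The ordinary falling factorial `(x)_k = x(x-1)⋯(x-k+1)`. -/
noncomputable def fallFact (x : ℝ) (k : ℕ) : ℝ := ∏ i ∈ Finset.range k, (x - i)

/-! Since `(1+λt)^{r/λ} = ((1+λt)^{1/λ})^r`, the binomial theorem applied to
`(1+λt)^{1/λ} = ((1+λt)^{1/λ} - 1) + 1` gives
`(1+λt)^{r/λ}((1+λt)^{1/λ} - 1)^k = ∑_{m ≤ r} C(r,m) ((1+λt)^{1/λ} - 1)^{m+k}`, and comparing
coefficients of `t^n` yields the sum over `m ≤ r`. The range can then be changed to `m ≤ n - k`,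
because `((1+λt)^{1/λ} - 1)^{m+k}` is divisible by `t^{m+k}`. -/

open PowerSeries

theorem Finset.sum_range_eq_sum_range_of_eq_zero {M : Type*} [AddCommMonoid M] {f : ℕ → M}
    {a b : ℕ} (ha : ∀ m ≥ a, f m = 0) (hb : ∀ m ≥ b, f m = 0) :
    ∑ m ∈ range a, f m = ∑ m ∈ range b, f m := by
  rcases le_total a b with h | h
  · exact (eventually_constant_sum ha h).symm
  · exact eventually_constant_sum hb h

theorem add_one_pow_mul_pow {R : Type*} [CommSemiring R] (f : R) (r k : ℕ) :
    (f + 1) ^ r * f ^ k = ∑ m ∈ range (r + 1), r.choose m • f ^ (m + k) := by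
  rw [add_pow, sum_mul]
  refine sum_congr rfl fun m _ => ?_
  rw [one_pow, mul_one, pow_add, nsmul_eq_mul]
  ring

theorem degFall_succ (x lam : ℝ) (n : ℕ) :
    degFall x lam (n + 1) = degFall x lam n * (x - n * lam) :=
  prod_range_succ _ _

theorem degFall_add (x y lam : ℝ) (n : ℕ) :
    degFall (x + y) lam n =
      ∑ ij ∈ antidiagonal n, (n.choose ij.1 : ℝ) * (degFall x lam ij.1 * degFall y lam ij.2) := by
  induction n with
  | zero => simp [degFall]
  | succ n ih =>
    rw [sum_antidiagonal_choose_succ_mul (fun i j => degFall x lam i * degFall y lam j),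
      degFall_succ, ih, sum_mul, ← sum_add_distrib]
    refine sum_congr rfl fun ⟨i, j⟩ hij => ?_
    obtain rfl : i + j = n := mem_antidiagonal.mp hij
    rw [← Nat.choose_symm_add, degFall_succ, degFall_succ]
    push_cast
    ring

theorem coeff_degExp (lam y : ℝ) (n : ℕ) :
    coeff n (degExp lam y) = degFall y lam n / n.factorial :=
  coeff_mk _ _

theorem constantCoeff_degExp (lam y : ℝ) : constantCoeff (degExp lam y) = 1 := by
  simp [← coeff_zero_eq_constantCoeff_apply, coeff_degExp, degFall]

theorem degExp_zero (lam : ℝ) : degExp lam 0 = 1 := by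
  ext (_ | n)
  · simp [coeff_degExp, degFall]
  · simp [coeff_degExp, degFall, prod_range_succ']

theorem degExp_add (lam x y : ℝ) : degExp lam (x + y) = degExp lam x * degExp lam y := by
  ext n
  simp only [coeff_mul, coeff_degExp, degFall_add, sum_div]
  refine sum_congr rfl fun ⟨i, j⟩ hij => ?_
  obtain rfl : i + j = n := mem_antidiagonal.mp hij
  rw [Nat.cast_add_choose]
  field_simp

theorem degExp_natCast_mul (lam y : ℝ) (r : ℕ) : degExp lam (r * y) = degExp lam y ^ r := by
  induction r with
  | zero => simpa using degExp_zero lam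
  | succ r ih => rw [Nat.cast_succ, add_one_mul, degExp_add, ih, pow_succ]

theorem degStirling2_eq_zero_of_lt (lam : ℝ) {n k : ℕ} (h : n < k) :
    degStirling2 lam n k = 0 := by
  have hX : X ^ k ∣ (degExp lam 1 - 1) ^ k :=
    pow_dvd_pow_of_dvd (X_dvd_iff.mpr (by simp [constantCoeff_degExp])) k
  simp [degStirling2, X_pow_dvd_iff.mp hX n h]

theorem factorial_mul_coeff_pow_degExp_sub_one (lam : ℝ) (n k : ℕ) :
    (n.factorial : ℝ) * coeff n ((degExp lam 1 - 1) ^ k) = k.factorial * degStirling2 lam n k := by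
  rw [degStirling2, map_smul, smul_eq_mul]
  field_simp

theorem extDegStirling2_eq_sum_range_choose (lam : ℝ) (r n k : ℕ) :
    extDegStirling2 lam r n k =
      ∑ m ∈ range (r + 1),
        ((m + k).choose m : ℝ) * (r.choose m : ℝ) * (m.factorial : ℝ) *
          degStirling2 lam n (m + k) := by
  have hE : degExp lam r = (degExp lam 1 - 1 + 1) ^ r := by
    rw [sub_add_cancel, ← degExp_natCast_mul, mul_one]
  rw [extDegStirling2, hE, add_one_pow_mul_pow, map_smul, map_sum, smul_eq_mul, mul_sum,
    mul_sum]
  refine sum_congr rfl fun m _ => ?_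
  have hfac : ((m + k).factorial : ℝ) = (m + k).choose m * m.factorial * k.factorial := by
    exact_mod_cast (Nat.choose_symm_add ▸ Nat.add_choose_mul_factorial_mul_factorial m k).symm
  rw [map_nsmul, nsmul_eq_mul, mul_left_comm, mul_left_comm (n.factorial : ℝ),
    factorial_mul_coeff_pow_degExp_sub_one, hfac]
  field_simp

theorem extDegStirling2_eq_sum_degStirling2_general (lam : ℝ) (r n k : ℕ) :
    extDegStirling2 lam r n k =
      ∑ m ∈ Finset.range (n - k + 1),
        ((m + k).choose m : ℝ) * (r.choose m : ℝ) * (m.factorial : ℝ) *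
          degStirling2 lam n (m + k) := by
  rw [extDegStirling2_eq_sum_range_choose]
  refine sum_range_eq_sum_range_of_eq_zero (fun m hm => ?_) (fun m hm => ?_)
  · simp [Nat.choose_eq_zero_of_lt (Nat.lt_of_succ_le hm)]
  · simp [degStirling2_eq_zero_of_lt lam (by omega : n < m + k)]

theorem extDegStirling2_eq_sum_degStirling2 (lam : ℝ) (r n k : ℕ) (h : k ≤ n) :
    extDegStirling2 lam r n k =
      ∑ m ∈ Finset.range (n - k + 1),
        ((m + k).choose m : ℝ) * (r.choose m : ℝ) * (m.factorial : ℝ) *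
          degStirling2 lam n (m + k) :=
  extDegStirling2_eq_sum_degStirling2_general lam r n k
end

section
/- (Theorem 2.5) For λ ∈ ℝ, r a nonnegative integer, every nonnegative integer n, and every real x, the extended degenerate Bell polynomial satisfies Bel^{(r)}_{n,λ}(x) = Σ_{k=0}^{n} Σ_{m=0}^{k} C(n,k) Bel_{n−k,λ}(x) λ^{k−m} r^m S_1(k,m). -/
open Finset

/-! The homogenization of the falling factorial `∏_{i<k} (X - i)`, evaluated at `(y, λ)`, is
`(y|λ)_k = ∏_{i<k} (y - iλ)`; reading it off coefficientwise gives
`(y|λ)_k = Σ_m S_1(k,m) y^m λ^{k-m}`, with no case distinction at `λ = 0`. The theorem is then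
the binomial convolution of exponential generating functions applied to the product
`(1+λt)^{r/λ} · e^{x((1+λt)^{1/λ} - 1)}`. -/

namespace Polynomial

lemma eval_homogenize_eq_sum_range {R : Type*} [CommSemiring R] (p : R[X]) (n : ℕ)
    (x : Fin 2 → R) :
    MvPolynomial.eval x (p.homogenize n) =
      ∑ m ∈ range (n + 1), p.coeff m * x 0 ^ m * x 1 ^ (n - m) := by
  simp [homogenize, Finset.Nat.sum_antidiagonal_eq_sum_range_succ_mk, MvPolynomial.eval_monomial,
    Finsupp.update_eq_add_single, mul_assoc]

lemma homogenize_prod_range_X_sub_C {R : Type*} [CommRing R] (k : ℕ) :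
    (∏ i ∈ range k, (X - C (i : R))).homogenize k =
      ∏ i ∈ range k, (MvPolynomial.X 0 - MvPolynomial.C (i : R) * MvPolynomial.X 1) := by
  have h := homogenize_finsetProd (s := range k) (p := fun i => X - C (i : R)) (n := fun _ => 1)
    (fun i _ => natDegree_X_sub_C_le _)
  simp only [sum_const, card_range, smul_eq_mul, mul_one] at h
  rw [h]
  refine prod_congr rfl fun i _ => ?_
  rw [homogenize_sub, homogenize_X one_ne_zero, homogenize_C]
  simp

end Polynomial

namespace PowerSeries

lemma factorial_mul_coeff_mul {R : Type*} [CommSemiring R] (f g : PowerSeries R) (n : ℕ) :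
    (n.factorial : R) * coeff n (f * g) =
      ∑ k ∈ range (n + 1), (n.choose k : R) * (k.factorial * coeff k f) *
        ((n - k).factorial * coeff (n - k) g) := by
  rw [coeff_mul, Nat.sum_antidiagonal_eq_sum_range_succ_mk, mul_sum]
  refine sum_congr rfl fun k hk => ?_
  rw [← Nat.choose_mul_factorial_mul_factorial (Nat.lt_succ_iff.mp (mem_range.mp hk))]
  push_cast
  ring

end PowerSeries

lemma degFall_eq_sum_stirling1 (y lam : ℝ) (k : ℕ) :
    degFall y lam k = ∑ m ∈ range (k + 1), stirling1 k m * y ^ m * lam ^ (k - m) := by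
  have h := congrArg (MvPolynomial.eval ![y, lam]) (Polynomial.homogenize_prod_range_X_sub_C k)
  simp only [Polynomial.eval_homogenize_eq_sum_range, MvPolynomial.eval_prod, map_sub, map_mul,
    MvPolynomial.eval_X, MvPolynomial.eval_C] at h
  simpa [degFall, stirling1] using h.symm

lemma factorial_mul_coeff_degExp (lam y : ℝ) (k : ℕ) :
    (k.factorial : ℝ) * PowerSeries.coeff k (degExp lam y) = degFall y lam k := by
  rw [degExp, PowerSeries.coeff_mk, mul_div_cancel₀ _ (Nat.cast_ne_zero.mpr k.factorial_ne_zero)]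

theorem extDegBell_eq_sum_degBell (lam : ℝ) (r : ℕ) (n : ℕ) (x : ℝ) :
    extDegBell lam r x n =
      ∑ k ∈ Finset.range (n + 1), ∑ m ∈ Finset.range (k + 1),
        (n.choose k : ℝ) * degBell lam x (n - k) * lam ^ (k - m) * (r : ℝ) ^ m *
          stirling1 k m := by
  rw [extDegBell, PowerSeries.factorial_mul_coeff_mul]
  refine sum_congr rfl fun k _ => ?_
  rw [factorial_mul_coeff_degExp, ← degBell, degFall_eq_sum_stirling1, mul_sum, sum_mul]
  exact sum_congr rfl fun m _ => by ring
end
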